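/- Let A be a real symmetric n×n matrix, ξ* ∈ {0,1}^n with Σᵢ ξ*ᵢ = K, and Z* = ξ*(ξ*)ᵀ. Suppose there exist a diagonal matrix D* ≥ 0, a symmetric matrix B* with nonnegative entries, and reals λ*, η* such that S* := D* - B* - A + η*I + λ*J is positive semidefinite with strictly positive second smallest eigenvalue, S*ξ* = 0, d*ᵢ(Z*ᵢᵢ - 1) = 0 for all i, and B*ᵢⱼ Z*ᵢⱼ = 0 for all i, j. Then Z* is the unique maximizer of ⟨A, Z⟩ over symmetric PSD matrices Z with 0 ≤ Zᵢⱼ, Zᵢᵢ ≤ 1 for all i, j, trace(Z) = K, and ⟨J, Z⟩ = K². -/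

import Mathlib

/-!
Weak duality plus complementary slackness. Since `A = D + ηI + λJ - S - B`, every feasible `Z`
satisfies `⟨A, Z⟩ = ∑ dᵢ Zᵢᵢ + ηK + λK² - ⟨S, Z⟩ - ⟨B, Z⟩ ≤ tr D + ηK + λK²`, because
`Zᵢᵢ ≤ 1`, `⟨B, Z⟩ ≥ 0` and `⟨S, Z⟩ = tr (S Z) ≥ 0` for positive semidefinite `S`, `Z`; the
slackness conditions make this an equality at `Z* = ξ ξᵀ`. If `Z` attains it too, then
`tr (S Z) = 0`, which for positive semidefinite matrices forces `S Z = 0`. So the columns of `Z`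
lie in `ker S = span ξ`, the symmetric `Z` is a multiple of `ξ ξᵀ`, and the trace fixes the
multiple.
-/

open Matrix
open scoped ComplexOrder

namespace Matrix

section FrobeniusInner

variable {m n R : Type*} [Fintype m] [Fintype n]

def frobeniusInner [Mul R] [AddCommMonoid R] (M Z : Matrix m n R) : R :=
  ∑ i, ∑ j, M i j * Z i j

theorem frobeniusInner_add_left [NonUnitalNonAssocSemiring R] (M N Z : Matrix m n R) :
    frobeniusInner (M + N) Z = frobeniusInner M Z + frobeniusInner N Z := by
  simp only [frobeniusInner, Matrix.add_apply, add_mul, Finset.sum_add_distrib]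

theorem frobeniusInner_sub_left [NonUnitalNonAssocRing R] (M N Z : Matrix m n R) :
    frobeniusInner (M - N) Z = frobeniusInner M Z - frobeniusInner N Z := by
  simp only [frobeniusInner, Matrix.sub_apply, sub_mul, Finset.sum_sub_distrib]

theorem frobeniusInner_smul_left [Semiring R] (c : R) (M Z : Matrix m n R) :
    frobeniusInner (c • M) Z = c * frobeniusInner M Z := by
  simp only [frobeniusInner, Matrix.smul_apply, smul_eq_mul, mul_assoc, Finset.mul_sum]

theorem frobeniusInner_nonneg [Semiring R] [PartialOrder R] [IsOrderedRing R]
    {M Z : Matrix m n R} (hM : ∀ i j, 0 ≤ M i j) (hZ : ∀ i j, 0 ≤ Z i j) :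
    0 ≤ frobeniusInner M Z :=
  Finset.sum_nonneg fun i _ => Finset.sum_nonneg fun j _ => mul_nonneg (hM i j) (hZ i j)

theorem frobeniusInner_eq_trace [CommSemiring R] (M Z : Matrix m n R) :
    frobeniusInner M Z = (Mᵀ * Z).trace := by
  simp only [frobeniusInner, trace, diag_apply, mul_apply, transpose_apply]
  exact Finset.sum_comm

theorem frobeniusInner_ones_left [NonAssocSemiring R] (Z : Matrix m n R) :
    frobeniusInner (of fun _ _ => 1) Z = ∑ i, ∑ j, Z i j := by
  simp only [frobeniusInner, of_apply, one_mul]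

theorem frobeniusInner_vecMulVec_right [CommSemiring R] (M : Matrix m n R) (u : m → R)
    (v : n → R) : frobeniusInner M (vecMulVec u v) = u ⬝ᵥ (M *ᵥ v) := by
  simp only [frobeniusInner, vecMulVec_apply, dotProduct, mulVec, Finset.mul_sum]
  exact Finset.sum_congr rfl fun i _ => Finset.sum_congr rfl fun j _ => by ring

variable [DecidableEq n]

theorem frobeniusInner_diagonal_left [NonUnitalNonAssocSemiring R] (d : n → R)
    (Z : Matrix n n R) : frobeniusInner (diagonal d) Z = ∑ i, d i * Z i i := by
  simp only [frobeniusInner, diagonal_apply, ite_mul, zero_mul, Finset.sum_ite_eq,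
    Finset.mem_univ, if_true]

theorem frobeniusInner_one_left [NonAssocSemiring R] (Z : Matrix n n R) :
    frobeniusInner 1 Z = Z.trace := by
  simp only [← diagonal_one, frobeniusInner_diagonal_left, one_mul, trace, diag_apply]

end FrobeniusInner

namespace PosSemidef

variable {n 𝕜 : Type*} [Fintype n] [RCLike 𝕜] {S Z : Matrix n n 𝕜}

open scoped MatrixOrder in
theorem exists_trace_mul_eq_trace_conj (hZ : Z.PosSemidef) :
    ∃ W : Matrix n n 𝕜, Z = Wᴴ * W ∧ (S * Z).trace = (W * S * Wᴴ).trace := by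
  classical
  obtain ⟨W, rfl⟩ := CStarAlgebra.nonneg_iff_eq_star_mul_self.mp hZ.nonneg
  refine ⟨W, rfl, ?_⟩
  rw [star_eq_conjTranspose, ← mul_assoc, trace_mul_comm, mul_assoc]

theorem trace_mul_nonneg (hS : S.PosSemidef) (hZ : Z.PosSemidef) : 0 ≤ (S * Z).trace := by
  obtain ⟨W, -, htr⟩ := hZ.exists_trace_mul_eq_trace_conj (S := S)
  exact htr ▸ (hS.mul_mul_conjTranspose_same W).trace_nonneg

open scoped MatrixOrder in
theorem mul_eq_zero_of_trace_mul_eq_zero (hS : S.PosSemidef) (hZ : Z.PosSemidef)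
    (h : (S * Z).trace = 0) : S * Z = 0 := by
  classical
  obtain ⟨W, rfl, htr⟩ := hZ.exists_trace_mul_eq_trace_conj (S := S)
  obtain ⟨R, rfl⟩ := CStarAlgebra.nonneg_iff_eq_star_mul_self.mp hS.nonneg
  rw [star_eq_conjTranspose] at h htr ⊢
  have hRW : R * Wᴴ = 0 := by
    rw [← conjTranspose_mul_self_eq_zero,
      ← (posSemidef_conjTranspose_mul_self _).trace_eq_zero_iff, ← h, htr]
    simp only [conjTranspose_mul, conjTranspose_conjTranspose, mul_assoc]
  rw [mul_assoc, ← mul_assoc R, hRW, zero_mul, mul_zero]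

end PosSemidef

section RankOne

variable {n R : Type*}

theorem exists_eq_smul_of_mulVec_eq_zero [Fintype n] [Field R] [LinearOrder R]
    [IsStrictOrderedRing R] {S : Matrix n n R} {v : n → R}
    (hpos : ∀ x, x ⬝ᵥ v = 0 → x ≠ 0 → 0 < x ⬝ᵥ (S *ᵥ x)) (hv : S *ᵥ v = 0)
    {x : n → R} (hx : S *ᵥ x = 0) : ∃ c : R, x = c • v := by
  set c := (x ⬝ᵥ v) / (v ⬝ᵥ v)
  refine ⟨c, sub_eq_zero.mp (not_not.mp fun hne => ?_)⟩
  have horth : (x - c • v) ⬝ᵥ v = 0 := by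
    rcases eq_or_ne v 0 with rfl | hv0
    · simp
    · rw [sub_dotProduct, smul_dotProduct, smul_eq_mul,
        div_mul_cancel₀ _ (dotProduct_self_eq_zero.not.mpr hv0), sub_self]
  have hker : S *ᵥ (x - c • v) = 0 := by
    rw [mulVec_sub, mulVec_smul, hx, hv, smul_zero, sub_zero]
  simpa [hker] using hpos _ horth hne

theorem IsSymm.exists_eq_smul_vecMulVec [Field R] {Z : Matrix n n R} (hZ : Z.IsSymm)
    {v : n → R} (hcol : ∀ j, ∃ c : R, Zᵀ j = c • v) : ∃ t : R, Z = t • vecMulVec v v := by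
  choose c hc using hcol
  have hZc : ∀ i j, Z i j = c j * v i := fun i j => by
    simpa using congrFun (hc j) i
  rcases eq_or_ne v 0 with rfl | hv
  · exact ⟨0, Matrix.ext fun i j => by simp [hZc]⟩
  obtain ⟨k, hk⟩ : ∃ k, v k ≠ 0 := Function.ne_iff.mp hv
  refine ⟨c k / v k, Matrix.ext fun i j => ?_⟩
  have hsymm : c j * v k = c k * v j := by rw [← hZc, ← hZc, hZ.apply]
  rw [hZc, Matrix.smul_apply, vecMulVec_apply, smul_eq_mul]
  field_simp
  linear_combination v i * hsymm

end RankOne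

theorem PosSemidef.eq_vecMulVec_of_trace_mul_eq_zero {n : Type*} [Fintype n]
    {S Z : Matrix n n ℝ} {v : n → ℝ} (hS : S.PosSemidef)
    (hpos : ∀ x, x ⬝ᵥ v = 0 → x ≠ 0 → 0 < x ⬝ᵥ (S *ᵥ x)) (hv : S *ᵥ v = 0)
    (hZ : Z.PosSemidef) (h : (S * Z).trace = 0) (htr : Z.trace = v ⬝ᵥ v) :
    Z = vecMulVec v v := by
  have hSZ := hS.mul_eq_zero_of_trace_mul_eq_zero hZ h
  have hcol : ∀ j, ∃ c : ℝ, Zᵀ j = c • v := fun j =>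
    exists_eq_smul_of_mulVec_eq_zero hpos hv (funext fun i => congrFun (congrFun hSZ i) j)
  obtain ⟨t, rfl⟩ := (isHermitian_iff_isSymm.mp hZ.isHermitian).exists_eq_smul_vecMulVec hcol
  rcases eq_or_ne v 0 with rfl | hv0
  · simp
  · rw [trace_smul, trace_vecMulVec, smul_eq_mul] at htr
    rw [(mul_eq_right₀ (dotProduct_self_eq_zero.not.mpr hv0)).mp htr, one_smul]

theorem frobeniusInner_eq_of_dualSlack {n R : Type*} [Fintype n] [DecidableEq n] [CommRing R]
    {A B S : Matrix n n R} {d : n → R} {η lam : R}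
    (hS : S = diagonal d - B - A + η • 1 + lam • of fun _ _ => 1) (Z : Matrix n n R) :
    frobeniusInner A Z = ∑ i, d i * Z i i + η * Z.trace + lam * ∑ i, ∑ j, Z i j
      - frobeniusInner S Z - frobeniusInner B Z := by
  have hA : A = diagonal d + η • 1 + lam • of (fun _ _ => 1) - S - B := by rw [hS]; abel
  rw [hA, frobeniusInner_sub_left, frobeniusInner_sub_left, frobeniusInner_add_left,
    frobeniusInner_add_left, frobeniusInner_smul_left, frobeniusInner_smul_left,
    frobeniusInner_diagonal_left, frobeniusInner_one_left, frobeniusInner_ones_left]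

end Matrix

theorem stmt7_general (n K : ℕ) (A : Matrix (Fin n) (Fin n) ℝ)
    (ξ : Fin n → ℝ) (hξ : ∀ i, ξ i = 0 ∨ ξ i = 1) (hsum : ∑ i, ξ i = K)
    (d : Fin n → ℝ) (hd : ∀ i, 0 ≤ d i)
    (B : Matrix (Fin n) (Fin n) ℝ) (hBpos : ∀ i j, 0 ≤ B i j)
    (lam η : ℝ)
    (S : Matrix (Fin n) (Fin n) ℝ)
    (hS : S = Matrix.diagonal d - B - A + η • (1 : Matrix (Fin n) (Fin n) ℝ)
      + lam • (Matrix.of fun _ _ => (1 : ℝ)))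
    (hpsd : S.PosSemidef)
    (hl2 : ∀ x : Fin n → ℝ, x ⬝ᵥ ξ = 0 → x ≠ 0 → 0 < x ⬝ᵥ (S *ᵥ x))
    (hker : S *ᵥ ξ = 0)
    (hslackD : ∀ i, d i * (ξ i * ξ i - 1) = 0)
    (hslackB : ∀ i j, B i j * (ξ i * ξ j) = 0) :
    ∀ Z : Matrix (Fin n) (Fin n) ℝ, Z.PosSemidef →
      (∀ i j, 0 ≤ Z i j) → (∀ i, Z i i ≤ 1) →
      Z.trace = (K : ℝ) → (∑ i, ∑ j, Z i j) = (K : ℝ) ^ 2 →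
      (∑ i, ∑ j, A i j * Z i j) ≤ (∑ i, ∑ j, A i j * (ξ i * ξ j)) ∧
      ((∑ i, ∑ j, A i j * Z i j) = (∑ i, ∑ j, A i j * (ξ i * ξ j)) →
        Z = Matrix.of fun i j => ξ i * ξ j) := by
  intro Z hZ hZnonneg hZdiag htr hsumZ
  change frobeniusInner A Z ≤ frobeniusInner A (vecMulVec ξ ξ) ∧
    (frobeniusInner A Z = frobeniusInner A (vecMulVec ξ ξ) → Z = vecMulVec ξ ξ)
  have hξξ : ξ ⬝ᵥ ξ = K := by
    rw [← hsum]
    exact Finset.sum_congr rfl fun i _ => by rcases hξ i with h | h <;> simp [h]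
  have hvalue := frobeniusInner_eq_of_dualSlack hS
  have hopt : frobeniusInner A (vecMulVec ξ ξ) = ∑ i, d i + η * K + lam * K ^ 2 := by
    have hd' : ∀ i, d i * (ξ i * ξ i) = d i := fun i => by linear_combination hslackD i
    have hB0 : frobeniusInner B (vecMulVec ξ ξ) = 0 :=
      Finset.sum_eq_zero fun i _ => Finset.sum_eq_zero fun j _ => hslackB i j
    simp only [hvalue, vecMulVec_apply, hd', trace_vecMulVec, hξξ, ← Finset.mul_sum,
      ← Finset.sum_mul, hsum, frobeniusInner_vecMulVec_right, hker, dotProduct_zero, hB0]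
    ring
  have hSZ : frobeniusInner S Z = (S * Z).trace := by
    rw [frobeniusInner_eq_trace, (isHermitian_iff_isSymm.mp hpsd.isHermitian).eq]
  have hSZ_nonneg : 0 ≤ frobeniusInner S Z := hSZ ▸ hpsd.trace_mul_nonneg hZ
  have hBZ_nonneg : 0 ≤ frobeniusInner B Z := frobeniusInner_nonneg hBpos hZnonneg
  have hdZ : ∑ i, d i * Z i i ≤ ∑ i, d i :=
    Finset.sum_le_sum fun i _ => mul_le_of_le_one_right (hd i) (hZdiag i)
  rw [hopt, hvalue, htr, hsumZ]
  refine ⟨by linarith, fun heq => ?_⟩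
  exact hpsd.eq_vecMulVec_of_trace_mul_eq_zero hl2 hker hZ (by linarith) (htr.trans hξξ.symm)

theorem stmt7 (n K : ℕ) (A : Matrix (Fin n) (Fin n) ℝ) (hA : A.IsSymm)
    (ξ : Fin n → ℝ) (hξ : ∀ i, ξ i = 0 ∨ ξ i = 1) (hsum : ∑ i, ξ i = K)
    (d : Fin n → ℝ) (hd : ∀ i, 0 ≤ d i)
    (B : Matrix (Fin n) (Fin n) ℝ) (hBsymm : B.IsSymm) (hBpos : ∀ i j, 0 ≤ B i j)
    (lam η : ℝ)
    (S : Matrix (Fin n) (Fin n) ℝ)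
    (hS : S = Matrix.diagonal d - B - A + η • (1 : Matrix (Fin n) (Fin n) ℝ)
      + lam • (Matrix.of fun _ _ => (1 : ℝ)))
    (hpsd : S.PosSemidef)
    (hl2 : ∀ x : Fin n → ℝ, x ⬝ᵥ ξ = 0 → x ≠ 0 → 0 < x ⬝ᵥ (S *ᵥ x))
    (hker : S *ᵥ ξ = 0)
    (hslackD : ∀ i, d i * (ξ i * ξ i - 1) = 0)
    (hslackB : ∀ i j, B i j * (ξ i * ξ j) = 0) :
    ∀ Z : Matrix (Fin n) (Fin n) ℝ, Z.PosSemidef →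
      (∀ i j, 0 ≤ Z i j) → (∀ i, Z i i ≤ 1) →
      Z.trace = (K : ℝ) → (∑ i, ∑ j, Z i j) = (K : ℝ) ^ 2 →
      (∑ i, ∑ j, A i j * Z i j) ≤ (∑ i, ∑ j, A i j * (ξ i * ξ j)) ∧
      ((∑ i, ∑ j, A i j * Z i j) = (∑ i, ∑ j, A i j * (ξ i * ξ j)) →
        Z = Matrix.of fun i j => ξ i * ξ j) :=
  stmt7_general n K A ξ hξ hsum d hd B hBpos lam η S hS hpsd hl2 hker hslackD hslackB
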